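/- Every prefix MSC obtained from a channel-compliant word satisfies causal delivery: for any two send events e_i ≤ e_j (in the MSC partial order) on the same channel (P,Q), either e_j is unmatched, or both are matched and the matching receive of e_i precedes the matching receive of e_j. -/

import Mathlib

/-- Events: `snd P Q m` is process `P` sending message `m` to `Q`;
    `rcv P Q m` is process `Q` receiving message `m` from `P`. -/
inductive Ev where
  | snd : ℕ → ℕ → ℕ → Ev
  | rcv : ℕ → ℕ → ℕ → Ev
deriving DecidableEq

/-- Message values of send events on channel (P,Q) in w. -/
def sends (w : List Ev) (P Q : ℕ) : List ℕ :=
  w.filterMap fun e => match e with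
    | .snd p q m => if p = P ∧ q = Q then some m else none
    | _ => none

/-- Message values of receive events on channel (P,Q) in w. -/
def recvs (w : List Ev) (P Q : ℕ) : List ℕ :=
  w.filterMap fun e => match e with
    | .rcv p q m => if p = P ∧ q = Q then some m else none
    | _ => none

def channelCompliant (w : List Ev) : Prop :=
  ∀ u, u <+: w → ∀ P Q, recvs u P Q <+: sends u P Q

def complete (w : List Ev) : Prop :=
  ∀ P Q, sends w P Q = recvs w P Q

def bounded (B : ℕ) (w : List Ev) : Prop :=
  ∀ u, u <+: w → ∀ P Q, (sends u P Q).length ≤ (recvs u P Q).length + B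

def halfDuplex (w : List Ev) : Prop :=
  ∀ u, u <+: w → ∀ P Q,
    sends u P Q = recvs u P Q ∨ sends u Q P = recvs u Q P

/-- Send at position i on channel (P,Q) is matched by receive at position j. -/
def Matches (w : List Ev) (P Q i j : ℕ) : Prop :=
  i < j ∧ j < w.length ∧
  (∃ m, w[i]? = some (.snd P Q m) ∧ w[j]? = some (.rcv P Q m)) ∧
  sends (w.take (i+1)) P Q = recvs (w.take (j+1)) P Q

def IsSendAt (w : List Ev) (P Q i : ℕ) : Prop := ∃ m, w[i]? = some (Ev.snd P Q m)
def IsRcvAt (w : List Ev) (P Q i : ℕ) : Prop := ∃ m, w[i]? = some (Ev.rcv P Q m)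
def MatchedAt (w : List Ev) (P Q i : ℕ) : Prop := ∃ j, Matches w P Q i j

/-- The process performing the event. -/
def actor : Ev → ℕ
  | .snd p _ _ => p
  | .rcv _ q _ => q

/-- Projection of a word onto the events of process X. -/
def proj (w : List Ev) (X : ℕ) : List Ev := w.filter (fun e => actor e == X)

/-- Two words induce the same MSC (same per-process orders; with FIFO matching,
    this determines the matching). -/
def sameMSC (w v : List Ev) : Prop := ∀ X, proj w X = proj v X

/-- Existentially B-bounded: some linearisation of msc(w) is B-bounded. -/
def existBounded (B : ℕ) (w : List Ev) : Prop :=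
  ∃ v, channelCompliant v ∧ sameMSC w v ∧ bounded B v

def isSnd : Ev → Prop
  | .snd _ _ _ => True
  | _ => False

def isRcv : Ev → Prop
  | .rcv _ _ _ => True
  | _ => False

/-- Positions i and j lie in the same block of the block decomposition. -/
def SameBlock (blocks : List (List Ev)) (i j : ℕ) : Prop :=
  ∃ t, ((blocks.take t).flatten).length ≤ i ∧ j < ((blocks.take (t+1)).flatten).length

/-- w is k-synchronisable: some linearisation of msc(w) splits into blocks of
    at most k sends followed by at most k receives, with matched pairs co-located. -/
def kSynchronisable (k : ℕ) (w : List Ev) : Prop :=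
  ∃ blocks : List (List Ev),
    channelCompliant blocks.flatten ∧ sameMSC w blocks.flatten ∧
    (∀ b ∈ blocks, ∃ s r, b = s ++ r ∧ s.length ≤ k ∧ r.length ≤ k ∧
      (∀ e ∈ s, isSnd e) ∧ (∀ e ∈ r, isRcv e)) ∧
    (∀ P Q i j, Matches blocks.flatten P Q i j → SameBlock blocks i j)

/-- One step of the indistinguishability relation ∼. -/
inductive Sim1 : List Ev → List Ev → Prop
  | ss (u v : List Ev) (P Q R S m m' : ℕ) (h : P ≠ R) :
      Sim1 (u ++ Ev.snd P Q m :: Ev.snd R S m' :: v)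
           (u ++ Ev.snd R S m' :: Ev.snd P Q m :: v)
  | rr (u v : List Ev) (P Q R S m m' : ℕ) (h : Q ≠ S) :
      Sim1 (u ++ Ev.rcv P Q m :: Ev.rcv R S m' :: v)
           (u ++ Ev.rcv R S m' :: Ev.rcv P Q m :: v)
  | sr (u v : List Ev) (P Q R S m m' : ℕ) (h1 : P ≠ S) (h2 : P ≠ R ∨ Q ≠ S) :
      Sim1 (u ++ Ev.snd P Q m :: Ev.rcv R S m' :: v)
           (u ++ Ev.rcv R S m' :: Ev.snd P Q m :: v)
  | srSame (u v : List Ev) (P Q m m' : ℕ)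
      (h : (recvs u P Q).length < (sends u P Q).length) :
      Sim1 (u ++ Ev.snd P Q m :: Ev.rcv P Q m' :: v)
           (u ++ Ev.rcv P Q m' :: Ev.snd P Q m :: v)

/-- The indistinguishability relation ∼ (finitely many swaps). -/
def Sim : List Ev → List Ev → Prop := Relation.ReflTransGen Sim1

/-! The send at position `i` is the `(k+1)`-th send on its channel, and under FIFO it can only be
matched by the `(k+1)`-th receive on that channel. If a later send on the channel is matched, at least
that many receives occur, so the receive matching `i` exists, and channel compliance places it after
`i`. Comparing receive counts of the prefixes then orders the two matching receives. -/

theorem List.exists_filterMap_take_succ_eq_take {α β : Type*} (f : α → Option β) {l : List α}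
    {a : ℕ} (ha : a < (l.filterMap f).length) :
    ∃ n e, l[n]? = some e ∧ f e = some (l.filterMap f)[a] ∧
      (l.take (n + 1)).filterMap f = (l.filterMap f).take (a + 1) := by
  induction l generalizing a with
  | nil => simp at ha
  | cons x t ih =>
    cases hx : f x with
    | none =>
      simp only [List.filterMap_cons_none hx] at ha ⊢
      obtain ⟨n, e, hn, he, htake⟩ := ih ha
      exact ⟨n + 1, e, by simpa using hn, he, by simp [List.filterMap_cons_none hx, htake]⟩
    | some b =>
      simp only [List.filterMap_cons_some hx] at ha ⊢
      cases a with
      | zero => exact ⟨0, x, rfl, by simpa using hx, by simp [List.filterMap_cons_some hx]⟩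
      | succ a =>
        obtain ⟨n, e, hn, he, htake⟩ := ih (Nat.lt_of_succ_lt_succ ha)
        exact ⟨n + 1, e, by simpa using hn, by simpa using he,
          by simp [List.filterMap_cons_some hx, htake]⟩

-- `recvs w P Q` is definitionally `w.filterMap (rcvMsg P Q)`.
def rcvMsg (P Q : ℕ) : Ev → Option ℕ
  | .rcv p q m => if p = P ∧ q = Q then some m else none
  | _ => none

theorem rcvMsg_eq_some {P Q m : ℕ} {e : Ev} : rcvMsg P Q e = some m ↔ e = .rcv P Q m := by
  cases e with
  | snd => simp [rcvMsg]
  | rcv p q m' =>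
    simp only [rcvMsg, Ev.rcv.injEq]
    split_ifs with hpq <;> aesop

section Channel

variable {w : List Ev} {P Q : ℕ}

theorem length_sends_take_le_of_le {i j : ℕ} (h : i ≤ j) :
    (sends (w.take i) P Q).length ≤ (sends (w.take j) P Q).length :=
  ((List.take_prefix_take_left h).filterMap _).length_le

theorem length_recvs_take_le_of_le {i j : ℕ} (h : i ≤ j) :
    (recvs (w.take i) P Q).length ≤ (recvs (w.take j) P Q).length :=
  ((List.take_prefix_take_left h).filterMap _).length_le

theorem sends_take_succ {i m : ℕ} (hi : w[i]? = some (.snd P Q m)) :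
    sends (w.take (i + 1)) P Q = sends (w.take i) P Q ++ [m] := by
  simp [List.take_add_one, hi, sends, List.filterMap_append]

theorem recvs_take_succ {i m : ℕ} (hi : w[i]? = some (.rcv P Q m)) :
    recvs (w.take (i + 1)) P Q = recvs (w.take i) P Q ++ [m] := by
  simp [List.take_add_one, hi, recvs, List.filterMap_append]

theorem exists_rcv_of_lt_length_recvs {a : ℕ} (ha : a < (recvs w P Q).length) :
    ∃ n, w[n]? = some (.rcv P Q (recvs w P Q)[a]) ∧
      recvs (w.take (n + 1)) P Q = (recvs w P Q).take (a + 1) := by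
  obtain ⟨n, e, hn, he, htake⟩ := List.exists_filterMap_take_succ_eq_take (rcvMsg P Q) ha
  exact ⟨n, rcvMsg_eq_some.mp he ▸ hn, htake⟩

theorem exists_matches_of_length_sends_le (h : channelCompliant w) {i m : ℕ}
    (hi : w[i]? = some (.snd P Q m))
    (hlen : (sends (w.take (i + 1)) P Q).length ≤ (recvs w P Q).length) :
    ∃ n, Matches w P Q i n := by
  set a := (sends (w.take i) P Q).length
  have hsend := sends_take_succ hi
  have hsend_len : (sends (w.take (i + 1)) P Q).length = a + 1 := by simp [hsend, a]
  have ha : a < (recvs w P Q).length := by omega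
  obtain ⟨n, hn, hrecv⟩ := exists_rcv_of_lt_length_recvs ha
  -- Both lists are prefixes of `sends w P Q`, so the shorter is a prefix of the longer.
  have hpre : sends (w.take (i + 1)) P Q = (recvs w P Q).take (a + 1) := by
    have : sends (w.take (i + 1)) P Q <+: recvs w P Q :=
      List.prefix_of_prefix_length_le ((w.take_prefix _).filterMap _) (h w List.prefix_rfl P Q) hlen
    rwa [List.prefix_iff_eq_take, hsend_len] at this
  have hmsg : (recvs w P Q)[a] = m := by
    have := congrArg (·[a]?) hpre
    simp only [hsend, List.getElem?_take, lt_add_one, if_true] at this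
    rw [List.getElem?_concat_length, List.getElem?_eq_getElem] at this
    exact (Option.some.inj this).symm
  have hin : i < n := by
    by_contra! hni
    obtain rfl | hni := hni.eq_or_lt
    · simp [hi] at hn
    have hcc := (h _ (w.take_prefix (n + 1)) P Q).length_le
    have hmono : (sends (w.take (n + 1)) P Q).length ≤ a := length_sends_take_le_of_le hni
    have : (recvs (w.take (n + 1)) P Q).length = a + 1 := by rw [hrecv, ← hpre, hsend_len]
    omega
  exact ⟨n, hin, (List.getElem?_eq_some_iff.mp hn).1, ⟨m, hi, hmsg ▸ hn⟩, hpre.trans hrecv.symm⟩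

theorem Matches.le_of_le {i i' j j' : ℕ} (hi : Matches w P Q i i') (hj : Matches w P Q j j')
    (hij : i ≤ j) : i' ≤ j' := by
  obtain ⟨-, -, ⟨m, -, hi'⟩, heqi⟩ := hi
  obtain ⟨-, -, -, heqj⟩ := hj
  by_contra! hji
  have hsends : (sends (w.take (i + 1)) P Q).length ≤ (sends (w.take (j + 1)) P Q).length :=
    length_sends_take_le_of_le (by omega)
  have hrecvs : (recvs (w.take (j' + 1)) P Q).length ≤ (recvs (w.take i') P Q).length :=
    length_recvs_take_le_of_le hji
  have hlast := congrArg List.length (recvs_take_succ hi')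
  rw [List.length_append, List.length_singleton] at hlast
  rw [heqi, heqj] at hsends
  omega

end Channel

theorem causal_delivery_general (w : List Ev) (P Q i j : ℕ)
    (h : channelCompliant w)
    (hi : IsSendAt w P Q i) (hij : i ≤ j) :
    (¬ MatchedAt w P Q j) ∨
    (∃ i' j', Matches w P Q i i' ∧ Matches w P Q j j' ∧ i' ≤ j') := by
  refine or_iff_not_imp_left.mpr fun hj => ?_
  obtain ⟨j', hjj'⟩ := not_not.mp hj
  obtain ⟨m, hm⟩ := hi
  have hlen : (sends (w.take (i + 1)) P Q).length ≤ (recvs w P Q).length :=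
    calc (sends (w.take (i + 1)) P Q).length
        ≤ (sends (w.take (j + 1)) P Q).length := length_sends_take_le_of_le (by omega)
      _ = (recvs (w.take (j' + 1)) P Q).length := by rw [hjj'.2.2.2]
      _ ≤ (recvs w P Q).length := ((w.take_prefix _).filterMap _).length_le
  obtain ⟨i', hii'⟩ := exists_matches_of_length_sends_le h hm hlen
  exact ⟨i', j', hii', hjj', hii'.le_of_le hjj' hij⟩

/-- causal delivery. In a channel-compliant word, for two sends
    on the same channel with i ≤ j, either the later send is unmatched, or
    both are matched and the matching receives are in the same order. -/
theorem causal_delivery (w : List Ev) (P Q i j : ℕ)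
    (h : channelCompliant w)
    (hi : IsSendAt w P Q i) (hj : IsSendAt w P Q j) (hij : i ≤ j) :
    (¬ MatchedAt w P Q j) ∨
    (∃ i' j', Matches w P Q i i' ∧ Matches w P Q j j' ∧ i' ≤ j') :=
  causal_delivery_general w P Q i j h hi hij
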